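/- The set D' ⊆ Σ^∞ of sequences that are not disjunctive is a Borel and σ-porous subset of the Cantor space (Σ^∞, ϱ) with respect to the Baire metric. -/

import Mathlib

/-!
A sequence is non-disjunctive iff it avoids some finite word `w`, and there are countably many
words. The sequences avoiding `w` form a closed set, an intersection over positions of finite
unions of clopen conditions. This set is porous: in the Baire ball of radius `r ≈ 2⁻ᵏ` around any
sequence, writing `w` at positions `k, …, k + |w| - 1` singles out a ball of radius
`2⁻⁽ᵏ⁺|w|⁾ ≈ r / 2^|w|` all of whose points contain `w`.
-/

open Metric Filter Set MeasureTheory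

/-- A sequence of symbols is disjunctive if it contains every finite word
as a block of consecutive letters. -/
def Disjunctive {Γ : Type*} (σ : ℕ → Γ) : Prop :=
  ∀ (m : ℕ) (w : Fin m → Γ), ∃ j : ℕ, ∀ l : Fin m, σ (j + l.1) = w l

open Classical in
/-- The Baire metric `ϱ(x,y) = 2^{-min{i ≥ 1 : x_i ≠ y_i}}` on the Cantor space of
(0-indexed) sequences: here `min` of the 1-indexed paper corresponds to `sInf + 1`. -/
noncomputable def baireDist {Γ : Type*} (x y : ℕ → Γ) : ℝ :=
  if x = y then 0 else (2 : ℝ) ^ (-((sInf {i : ℕ | x i ≠ y i} : ℕ) : ℤ) - 1)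

/-- `Ψ` is porous with respect to the distance function `ρ`. -/
def PorousWith {M : Type*} (ρ : M → M → ℝ) (Ψ : Set M) : Prop :=
  ∃ lam : ℝ, 0 < lam ∧ lam < 1 ∧ ∃ r₀ : ℝ, 0 < r₀ ∧
    ∀ ψ ∈ Ψ, ∀ r : ℝ, 0 < r → r < r₀ →
      ∃ υ : M, {x : M | ρ υ x < lam * r} ⊆ {x : M | ρ ψ x < r} \ Ψ

/-- `Ψ` is σ-porous with respect to `ρ`: a countable union of porous sets. -/
def SigmaPorousWith {M : Type*} (ρ : M → M → ℝ) (Ψ : Set M) : Prop :=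
  ∃ c : ℕ → Set M, (∀ n : ℕ, PorousWith ρ (c n)) ∧ Ψ = ⋃ n : ℕ, c n

lemma baireDist_lt_inv_two_pow_iff {Γ : Type*} {x y : ℕ → Γ} {k : ℕ} :
    baireDist x y < ((2 : ℝ) ^ k)⁻¹ ↔ ∀ i < k, x i = y i := by
  unfold baireDist
  split_ifs with hxy
  · simp [hxy]
  · have hdiff : {i | x i ≠ y i}.Nonempty := Function.ne_iff.mp hxy
    rw [← zpow_natCast, ← zpow_neg, zpow_lt_zpow_iff_right₀ one_lt_two]
    constructor
    · intro h i hi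
      by_contra hne
      have := Nat.sInf_le (show i ∈ {i | x i ≠ y i} from hne)
      omega
    · intro h
      by_contra! hle
      exact Nat.sInf_mem hdiff (h _ (by omega))

lemma porousWith_baireDist_of_exists_cylinder {Γ : Type*} {Ψ : Set (ℕ → Γ)} (m : ℕ)
    (h : ∀ ψ ∈ Ψ, ∀ k, ∃ υ : ℕ → Γ, (∀ i < k, υ i = ψ i) ∧
      ∀ x : ℕ → Γ, (∀ i < k + m, υ i = x i) → x ∉ Ψ) :
    PorousWith baireDist Ψ := by
  refine ⟨((2 : ℝ) ^ (m + 1))⁻¹, by positivity,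
    inv_lt_one_of_one_lt₀ (one_lt_pow₀ one_lt_two m.succ_ne_zero), 1, one_pos, ?_⟩
  intro ψ hψ r hr hr1
  -- `2⁻⁽ⁿ⁺¹⁾ < r ≤ 2⁻ⁿ`, so the `λ r`-ball around `υ` lies in its `2⁻⁽ⁿ⁺¹⁺ᵐ⁾`-cylinder
  obtain ⟨n, hn_le, hn_lt⟩ := exists_nat_pow_near ((one_le_inv₀ hr).2 hr1.le) one_lt_two
  obtain ⟨υ, hυψ, hυ⟩ := h ψ hψ (n + 1)
  refine ⟨υ, fun x hx => ?_⟩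
  have hscale : ((2 : ℝ) ^ (m + 1))⁻¹ * r ≤ ((2 : ℝ) ^ (n + 1 + m))⁻¹ :=
    calc ((2 : ℝ) ^ (m + 1))⁻¹ * r ≤ ((2 : ℝ) ^ (m + 1))⁻¹ * ((2 : ℝ) ^ n)⁻¹ := by
          gcongr
          exact (le_inv_comm₀ (by positivity) hr).1 hn_le
      _ = ((2 : ℝ) ^ (n + 1 + m))⁻¹ := by rw [← mul_inv, ← pow_add]; ring_nf
  have hυx := baireDist_lt_inv_two_pow_iff.1 (hx.trans_le hscale)
  refine ⟨?_, hυ x hυx⟩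
  calc baireDist ψ x < ((2 : ℝ) ^ (n + 1))⁻¹ :=
        baireDist_lt_inv_two_pow_iff.2 fun i hi => (hυψ i hi).symm.trans (hυx i (by omega))
    _ < r := inv_lt_of_inv_lt₀ hr hn_lt

def wordAvoiding {Γ : Type*} {m : ℕ} (w : Fin m → Γ) : Set (ℕ → Γ) :=
  {σ | ∀ j : ℕ, ∃ l : Fin m, σ (j + l) ≠ w l}

lemma setOf_not_disjunctive_eq_iUnion_wordAvoiding {Γ : Type*} :
    {σ : ℕ → Γ | ¬ Disjunctive σ} = ⋃ p : Σ m : ℕ, Fin m → Γ, wordAvoiding p.2 := by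
  ext σ
  simp [Disjunctive, wordAvoiding]

lemma isClosed_wordAvoiding {Γ : Type*} [TopologicalSpace Γ] [DiscreteTopology Γ] {m : ℕ}
    (w : Fin m → Γ) : IsClosed (wordAvoiding w) := by
  simp only [wordAvoiding, ofPred_forall, ofPred_exists]
  exact isClosed_iInter fun j => isClosed_iUnion_of_finite fun l =>
    (isClosed_discrete {w l}ᶜ).preimage (f := fun σ : ℕ → Γ => σ (j + l))
      (continuous_apply _)

lemma porousWith_wordAvoiding {Γ : Type*} {m : ℕ} (w : Fin m → Γ) :
    PorousWith baireDist (wordAvoiding w) := by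
  classical
  refine porousWith_baireDist_of_exists_cylinder m fun ψ _ k => ?_
  let υ : ℕ → Γ := fun i => if h : k ≤ i ∧ i < k + m then w ⟨i - k, by omega⟩ else ψ i
  refine ⟨υ, fun i hi => dif_neg (by omega), fun x hυx hx => ?_⟩
  obtain ⟨l, hl⟩ := hx k
  refine hl ?_
  rw [← hυx (k + l) (by omega)]
  simp [υ]

lemma porousWith_empty {M : Type*} (ρ : M → M → ℝ) : PorousWith ρ ∅ :=
  ⟨1 / 2, by norm_num, by norm_num, 1, one_pos, by simp⟩

lemma sigmaPorousWith_iUnion {M ι : Type*} [Countable ι] {ρ : M → M → ℝ} {c : ι → Set M}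
    (hc : ∀ i, PorousWith ρ (c i)) : SigmaPorousWith ρ (⋃ i, c i) := by
  rcases isEmpty_or_nonempty ι with hι | hι
  · exact ⟨fun _ => ∅, fun _ => porousWith_empty ρ, by simp⟩
  · obtain ⟨f, hf⟩ := exists_surjective_nat ι
    exact ⟨c ∘ f, fun n => hc (f n), (hf.iUnion_comp c).symm⟩

theorem nondisjunctive_borel_and_sigmaPorous_general
    {Γ : Type*} [Fintype Γ] [TopologicalSpace Γ] [DiscreteTopology Γ] :
    MeasurableSet[borel (ℕ → Γ)] {σ : ℕ → Γ | ¬ Disjunctive σ} ∧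
    SigmaPorousWith baireDist {σ : ℕ → Γ | ¬ Disjunctive σ} := by
  let _ := borel (ℕ → Γ)
  have : BorelSpace (ℕ → Γ) := ⟨rfl⟩
  rw [setOf_not_disjunctive_eq_iUnion_wordAvoiding]
  exact ⟨.iUnion fun p => (isClosed_wordAvoiding p.2).measurableSet,
    sigmaPorousWith_iUnion fun p => porousWith_wordAvoiding p.2⟩

/-- Theorem "GenericDisjunctive": the set of non-disjunctive
sequences is a Borel, σ-porous subset of the Cantor space with the Baire metric. -/
theorem nondisjunctive_borel_and_sigmaPorous
    {Γ : Type*} [Fintype Γ] [Nonempty Γ] [TopologicalSpace Γ] [DiscreteTopology Γ] :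
    MeasurableSet[borel (ℕ → Γ)] {σ : ℕ → Γ | ¬ Disjunctive σ} ∧
    SigmaPorousWith baireDist {σ : ℕ → Γ | ¬ Disjunctive σ} :=
  nondisjunctive_borel_and_sigmaPorous_general
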